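/- Let 0 < β < 1 and c > 0, and let T : ℕ → ℝ satisfy T(p) ≤ n^(c·p^γ) · T(⌈β·p⌉) for all p ≥ b, and T(p) ≤ n^b for p < b, where n ≥ 2, 0 < γ < 1, and b ≥ 1 are fixed. Then there exists a constant C (depending only on c, β, γ, b) such that T(p) ≤ n^(C·p^γ) for all p ≥ b. -/
import Mathlib
set_option maxHeartbeats 1000000


/-- Recurrence analysis: if `T(p) ≤ n^(c·p^γ)·T(⌈β·p⌉)` for `p ≥ b` and `T(p) ≤ n^b` for
`p < b`, then `T(p) ≤ n^(C·p^γ)` for all `p ≥ b`, for some constant `C`. -/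
theorem stmt9 (β : ℝ) (hβ0 : 0 < β) (hβ1 : β < 1) (c : ℝ) (hc : 0 < c)
    (γ : ℝ) (hγ0 : 0 < γ) (hγ1 : γ < 1) (b : ℕ) (hb : 1 ≤ b)
    (n : ℝ) (hn : 2 ≤ n) (T : ℕ → ℝ)
    (hrec : ∀ p : ℕ, b ≤ p → T p ≤ n ^ (c * (p : ℝ) ^ γ) * T ⌈β * (p : ℝ)⌉₊)
    (hbase : ∀ p : ℕ, p < b → T p ≤ n ^ (b : ℝ)) :
    ∃ C : ℝ, ∀ p : ℕ, b ≤ p → T p ≤ n ^ (C * (p : ℝ) ^ γ) := by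
  have hn0 : (0:ℝ) < n := lt_of_lt_of_le two_pos hn
  have hn1 : (1:ℝ) < n := lt_of_lt_of_le one_lt_two hn
  -- δ strictly between β^γ and 1
  have hβγ1 : β ^ γ < 1 := Real.rpow_lt_one hβ0.le hβ1 hγ0
  set δ : ℝ := (1 + β ^ γ) / 2 with hδ
  have hβγ0 : 0 < β ^ γ := Real.rpow_pos_of_pos hβ0 γ
  have hδ0 : 0 < δ := by positivity
  have hδ1 : δ < 1 := by simp only [hδ]; linarith
  have hβδ : β ^ γ < δ := by simp only [hδ]; linarith
  -- ε
  have hroot : β < δ ^ (1/γ) := by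
    have h1 : (β ^ γ) ^ (1/γ) < δ ^ (1/γ) :=
      Real.rpow_lt_rpow hβγ0.le hβδ (by positivity)
    have h2 : (β ^ γ) ^ (1/γ) = β := by
      rw [← Real.rpow_mul hβ0.le, one_div, mul_inv_cancel₀ hγ0.ne', Real.rpow_one]
    rwa [h2] at h1
  set ε : ℝ := δ ^ (1/γ) - β with hε
  have hε0 : 0 < ε := by simp only [hε]; linarith
  set p1 : ℕ := max (max b ⌈1/ε⌉₊) (⌈ 1/(1-β) ⌉₊ + 1) with hp1
  have hbp1 : b ≤ p1 := le_trans (le_max_left _ _) (le_max_left _ _)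
  have hp1pos : 0 < p1 := lt_of_lt_of_le hb hbp1
  -- the constant
  set C0 : ℝ := ∑ p ∈ Finset.range p1, max 0 (Real.logb n (max 1 (T p))) with hC0
  have hC00 : 0 ≤ C0 := Finset.sum_nonneg fun i _ => le_max_left _ _
  have hC0ge : ∀ p < p1, Real.logb n (max 1 (T p)) ≤ C0 := by
    intro p hp
    calc Real.logb n (max 1 (T p)) ≤ max 0 (Real.logb n (max 1 (T p))) := le_max_right _ _
    _ ≤ C0 := Finset.single_le_sum (f := fun i => max 0 (Real.logb n (max 1 (T i))))
        (fun i _ => le_max_left _ _) (Finset.mem_range.mpr hp)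
  set C : ℝ := (c + b) + c / (1 - δ) + C0 with hC
  have hCd : 0 < c / (1 - δ) := div_pos hc (by linarith)
  have hCb : 0 < c + (b:ℝ) := by positivity
  have hCpos : 0 < C := by simp only [hC]; linarith
  refine ⟨C, ?_⟩
  intro p
  induction p using Nat.strong_induction_on with
  | _ p ih =>
  intro hbp
  have hp1le : (1:ℝ) ≤ (p:ℝ) := by exact_mod_cast le_trans hb hbp
  have hpγ1 : (1:ℝ) ≤ (p:ℝ) ^ γ := Real.one_le_rpow hp1le hγ0.le
  have hpγ0 : (0:ℝ) < (p:ℝ) ^ γ := lt_of_lt_of_le one_pos hpγ1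
  by_cases hple : p < p1
  · -- small case
    have h1 : T p ≤ max 1 (T p) := le_max_right _ _
    have h2 : max 1 (T p) = n ^ (Real.logb n (max 1 (T p))) := by
      rw [Real.rpow_logb hn0 (ne_of_gt hn1) (lt_of_lt_of_le one_pos (le_max_left _ _))]
    have h3 : Real.logb n (max 1 (T p)) ≤ C * (p:ℝ) ^ γ := by
      calc Real.logb n (max 1 (T p)) ≤ C0 := hC0ge p hple
      _ ≤ C := by simp only [hC]; linarith
      _ = C * 1 := (mul_one C).symm
      _ ≤ C * (p:ℝ) ^ γ := by
          exact mul_le_mul_of_nonneg_left hpγ1 hCpos.le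
    calc T p ≤ max 1 (T p) := h1
    _ = n ^ (Real.logb n (max 1 (T p))) := h2
    _ ≤ n ^ (C * (p:ℝ) ^ γ) := Real.rpow_le_rpow_of_exponent_le hn1.le h3
  · -- large case: p ≥ p1
    push_neg at hple
    set m : ℕ := ⌈β * (p:ℝ)⌉₊ with hm
    have hβp0 : 0 ≤ β * (p:ℝ) := by positivity
    have hmlt : (m:ℝ) < β * p + 1 := Nat.ceil_lt_add_one hβp0
    -- p ≥ 1/(1-β) + 1
    have hpge2 : (1:ℝ)/(1-β) + 1 ≤ (p:ℝ) := by
      have h1 : (⌈1/(1-β)⌉₊ + 1 : ℕ) ≤ p := le_trans (le_trans (le_max_right _ _) hple) le_rfl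
      have h2 : (1:ℝ)/(1-β) ≤ (⌈1/(1-β)⌉₊ : ℝ) := Nat.le_ceil _
      have h3 : ((⌈1/(1-β)⌉₊ + 1 : ℕ) : ℝ) ≤ (p:ℝ) := by exact_mod_cast h1
      push_cast at h3
      linarith
    have h1β : (0:ℝ) < 1 - β := by linarith
    have hmp : m < p := by
      have : (m:ℝ) < (p:ℝ) := by
        have : (1:ℝ)/(1-β) < (p:ℝ) := by linarith
        have h4 : 1 < (p:ℝ) * (1-β) := by
          rw [div_lt_iff₀ h1β] at this; linarith [this]
        nlinarith [hmlt]
      exact_mod_cast this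
    -- 1/p ≤ ε
    have hεp : (1:ℝ)/(p:ℝ) ≤ ε := by
      have h1 : (⌈1/ε⌉₊ : ℕ) ≤ p := le_trans (le_trans (le_max_right _ _) (le_max_left _ _)) hple
      have h2 : (1:ℝ)/ε ≤ (p:ℝ) := le_trans (Nat.le_ceil _) (by exact_mod_cast h1)
      rw [div_le_iff₀ hε0] at h2
      rw [div_le_iff₀ (lt_of_lt_of_le one_pos hp1le)]
      linarith
    -- m^γ ≤ δ p^γ
    have hmδ : (m:ℝ) ^ γ ≤ δ * (p:ℝ) ^ γ := by
      have h1 : (m:ℝ) ≤ δ ^ (1/γ) * (p:ℝ) := by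
        have : β * p + 1 ≤ (β + ε) * p := by
          rw [add_mul]
          have : 1 ≤ ε * p := by
            rw [div_le_iff₀ (lt_of_lt_of_le one_pos hp1le)] at hεp
            linarith
          linarith
        have hβε : β + ε = δ ^ (1/γ) := by simp [hε]
        linarith [hmlt, hβε ▸ this]
      have h2 : (m:ℝ) ^ γ ≤ (δ ^ (1/γ) * (p:ℝ)) ^ γ :=
        Real.rpow_le_rpow (Nat.cast_nonneg m) h1 hγ0.le
      have h3 : (δ ^ (1/γ) * (p:ℝ)) ^ γ = δ * (p:ℝ) ^ γ := by
        rw [Real.mul_rpow (by positivity) (Nat.cast_nonneg p), ← Real.rpow_mul hδ0.le]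
        rw [one_div, inv_mul_cancel₀ hγ0.ne', Real.rpow_one]
      linarith
    have hrecp := hrec p hbp
    by_cases hmb : m < b
    · -- base case for m
      have hTm : T m ≤ n ^ (b:ℝ) := hbase m hmb
      have h1 : T p ≤ n ^ (c * (p:ℝ) ^ γ) * n ^ (b:ℝ) :=
        le_trans hrecp (mul_le_mul_of_nonneg_left hTm (Real.rpow_nonneg hn0.le _))
      rw [← Real.rpow_add hn0] at h1
      refine le_trans h1 (Real.rpow_le_rpow_of_exponent_le hn1.le ?_)
      have : c * (p:ℝ)^γ + b ≤ (c + b) * (p:ℝ)^γ := by nlinarith [hpγ1]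
      have hCge : (c + (b:ℝ)) ≤ C := by simp only [hC]; linarith
      nlinarith [hpγ0]
    · push_neg at hmb
      have hTm : T m ≤ n ^ (C * (m:ℝ) ^ γ) := ih m hmp hmb
      have h1 : T p ≤ n ^ (c * (p:ℝ) ^ γ) * n ^ (C * (m:ℝ) ^ γ) :=
        le_trans hrecp (mul_le_mul_of_nonneg_left hTm (Real.rpow_nonneg hn0.le _))
      rw [← Real.rpow_add hn0] at h1
      refine le_trans h1 (Real.rpow_le_rpow_of_exponent_le hn1.le ?_)
      have h2 : C * (m:ℝ)^γ ≤ C * (δ * (p:ℝ)^γ) := mul_le_mul_of_nonneg_left hmδ hCpos.le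
      have h3 : c / (1 - δ) ≤ C := by simp only [hC]; linarith
      have h4 : c ≤ C * (1 - δ) := by
        rw [div_le_iff₀ (by linarith : (0:ℝ) < 1 - δ)] at h3; linarith
      nlinarith [hpγ0]
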